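/- Let ν > 0, T > 0, and let F, G : [0,T] × ℝ³ → [0,∞) be measurable. Define H(t,ξ) = ∫₀ᵗ e^{−ν(t−s)|ξ|²} |ξ| (F(s,·) ∗ G(s,·))(ξ) ds, where ∗ denotes convolution in ξ on ℝ³. Then for every t ∈ [0,T], ∫_{ℝ³} |ξ|⁻¹ H(t,ξ) dξ ≤ ( ∫₀ᵀ ( ∫_{ℝ³} F(s,ξ) dξ )² ds )^{1/2} ( ∫₀ᵀ ( ∫_{ℝ³} G(s,ξ) dξ )² ds )^{1/2}. -/

import Mathlib

/-!
Since `s ≤ t`, the heat factor `e^{−ν(t−s)|ξ|²}` is at most `1`, and the weight `|ξ|` cancels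
against `|ξ|⁻¹` (also at `ξ = 0`, where `⊤ * 0 = 0` in `ℝ≥0∞`). After exchanging the `ξ`- and
`s`-integrals, Tonelli and translation invariance give `∫ F(s) ∗ G(s) = ∫ F(s) · ∫ G(s)`; enlarging
`[0,t]` to `[0,T]` and applying Cauchy–Schwarz in `s` finishes.
-/

open MeasureTheory

theorem inv_ofReal_mul_heat_kernel_le {ν t s r : ℝ} (hν : 0 ≤ ν) (hst : s ≤ t) (c : ENNReal) :
    (ENNReal.ofReal r)⁻¹ * (ENNReal.ofReal (Real.exp (-ν * (t - s) * r ^ 2)) * ENNReal.ofReal r * c)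
      ≤ c := by
  have hexp : ENNReal.ofReal (Real.exp (-ν * (t - s) * r ^ 2)) ≤ 1 := by
    refine ENNReal.ofReal_le_one.2 (Real.exp_le_one_iff.2 ?_)
    have : 0 ≤ ν * (t - s) * r ^ 2 := by have := sub_nonneg.2 hst; positivity
    linarith
  calc (ENNReal.ofReal r)⁻¹ * (ENNReal.ofReal (Real.exp (-ν * (t - s) * r ^ 2)) * ENNReal.ofReal r * c)
      ≤ (ENNReal.ofReal r)⁻¹ * (1 * ENNReal.ofReal r * c) := by gcongr
    _ = ((ENNReal.ofReal r)⁻¹ * ENNReal.ofReal r) * c := by ring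
    _ ≤ c := mul_le_of_le_one_left' (ENNReal.inv_mul_le_one _)

theorem lintegral_lintegral_mul_sub {G : Type*} [MeasurableSpace G] [AddGroup G]
    [MeasurableAdd₂ G] [MeasurableNeg G] {μ : Measure G} [SFinite μ] [μ.IsAddRightInvariant]
    {f g : G → ENNReal} (hf : Measurable f) (hg : Measurable g) :
    ∫⁻ ξ, ∫⁻ η, f η * g (ξ - η) ∂μ ∂μ = (∫⁻ η, f η ∂μ) * ∫⁻ ξ, g ξ ∂μ := by
  rw [lintegral_lintegral_swap (by fun_prop), ← lintegral_mul_const _ hf]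
  refine lintegral_congr fun η => ?_
  rw [lintegral_const_mul _ (by fun_prop), lintegral_sub_right_eq_self g η]

theorem lintegral_lintegral_lintegral_mul_sub {τ G : Type*} [MeasurableSpace τ] [MeasurableSpace G]
    [AddGroup G] [MeasurableAdd₂ G] [MeasurableNeg G] {ρ : Measure τ} [SFinite ρ]
    {μ : Measure G} [SFinite μ] [μ.IsAddRightInvariant] {F K : τ → G → ENNReal}
    (hF : Measurable (Function.uncurry F)) (hK : Measurable (Function.uncurry K)) :
    ∫⁻ ξ, ∫⁻ s, ∫⁻ η, F s η * K s (ξ - η) ∂μ ∂ρ ∂μ =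
      ∫⁻ s, (∫⁻ η, F s η ∂μ) * ∫⁻ ξ, K s ξ ∂μ ∂ρ := by
  have hconv : Measurable fun p : G × τ => ∫⁻ η, F p.2 η * K p.2 (p.1 - η) ∂μ := by
    have : Measurable fun q : (G × τ) × G => F q.1.2 q.2 * K q.1.2 (q.1.1 - q.2) :=
      (hF.comp (measurable_fst.snd.prodMk measurable_snd)).mul
        (hK.comp (measurable_fst.snd.prodMk (measurable_fst.fst.sub measurable_snd)))
    exact this.lintegral_prod_right'
  rw [lintegral_lintegral_swap hconv.aemeasurable]
  refine lintegral_congr fun s => ?_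
  exact lintegral_lintegral_mul_sub (hF.comp measurable_prodMk_left)
    (hK.comp measurable_prodMk_left)

theorem ENNReal.lintegral_mul_le_L2_mul_L2 {α : Type*} [MeasurableSpace α] (μ : Measure α)
    {f g : α → ENNReal} (hf : AEMeasurable f μ) (hg : AEMeasurable g μ) :
    ∫⁻ a, f a * g a ∂μ ≤ (∫⁻ a, f a ^ 2 ∂μ) ^ (1 / 2 : ℝ) * (∫⁻ a, g a ^ 2 ∂μ) ^ (1 / 2 : ℝ) := by
  simpa only [Pi.mul_apply, ENNReal.rpow_two] using
    ENNReal.lintegral_mul_le_Lp_mul_Lq μ Real.HolderConjugate.two_two hf hg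

theorem stmt_5_general (ν T : ℝ) (hν : 0 < ν)
    (F G : ℝ → EuclideanSpace ℝ (Fin 3) → ENNReal)
    (hF : Measurable (Function.uncurry F)) (hG : Measurable (Function.uncurry G))
    (H : ℝ → EuclideanSpace ℝ (Fin 3) → ENNReal)
    (hH : ∀ t ξ, H t ξ =
      ∫⁻ s in Set.Icc (0 : ℝ) t,
        ENNReal.ofReal (Real.exp (-ν * (t - s) * ‖ξ‖ ^ 2)) * ENNReal.ofReal ‖ξ‖ *
          ∫⁻ η, F s η * G s (ξ - η)) :
    ∀ t ∈ Set.Icc (0 : ℝ) T,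
      ∫⁻ ξ, (ENNReal.ofReal ‖ξ‖)⁻¹ * H t ξ ≤
        (∫⁻ s in Set.Icc (0 : ℝ) T, (∫⁻ ξ, F s ξ) ^ 2) ^ (1 / 2 : ℝ) *
          (∫⁻ s in Set.Icc (0 : ℝ) T, (∫⁻ ξ, G s ξ) ^ 2) ^ (1 / 2 : ℝ) := by
  rintro t ⟨-, htT⟩
  have hH_le : ∀ ξ, (ENNReal.ofReal ‖ξ‖)⁻¹ * H t ξ ≤
      ∫⁻ s in Set.Icc (0 : ℝ) t, ∫⁻ η, F s η * G s (ξ - η) := fun ξ => by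
    rw [hH]
    exact (lintegral_const_mul_le _ _).trans <| setLIntegral_mono' measurableSet_Icc
      fun s hs => inv_ofReal_mul_heat_kernel_le hν.le hs.2 _
  calc ∫⁻ ξ, (ENNReal.ofReal ‖ξ‖)⁻¹ * H t ξ
      ≤ ∫⁻ ξ, ∫⁻ s in Set.Icc (0 : ℝ) t, ∫⁻ η, F s η * G s (ξ - η) := lintegral_mono hH_le
    _ = ∫⁻ s in Set.Icc (0 : ℝ) t, (∫⁻ ξ, F s ξ) * ∫⁻ ξ, G s ξ :=
      lintegral_lintegral_lintegral_mul_sub hF hG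
    _ ≤ ∫⁻ s in Set.Icc (0 : ℝ) T, (∫⁻ ξ, F s ξ) * ∫⁻ ξ, G s ξ :=
      lintegral_mono_set (Set.Icc_subset_Icc le_rfl htT)
    _ ≤ _ := ENNReal.lintegral_mul_le_L2_mul_L2 _ hF.lintegral_prod_right'.aemeasurable
      hG.lintegral_prod_right'.aemeasurable

/-- Bilinear L^∞-χ^{−1} estimate: with
`H(t,ξ) = ∫₀ᵗ e^{−ν(t−s)|ξ|²} |ξ| (F(s,·) ∗ G(s,·))(ξ) ds`, for every `t ∈ [0,T]`,
`‖H(t)‖_{χ^{−1}} ≤ ‖F‖_{L²([0,T];χ⁰)} ‖G‖_{L²([0,T];χ⁰)}`. -/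
theorem stmt_5 (ν T : ℝ) (hν : 0 < ν) (hT : 0 < T)
    (F G : ℝ → EuclideanSpace ℝ (Fin 3) → ENNReal)
    (hF : Measurable (Function.uncurry F)) (hG : Measurable (Function.uncurry G))
    (H : ℝ → EuclideanSpace ℝ (Fin 3) → ENNReal)
    (hH : ∀ t ξ, H t ξ =
      ∫⁻ s in Set.Icc (0 : ℝ) t,
        ENNReal.ofReal (Real.exp (-ν * (t - s) * ‖ξ‖ ^ 2)) * ENNReal.ofReal ‖ξ‖ *
          ∫⁻ η, F s η * G s (ξ - η)) :
    ∀ t ∈ Set.Icc (0 : ℝ) T,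
      ∫⁻ ξ, (ENNReal.ofReal ‖ξ‖)⁻¹ * H t ξ ≤
        (∫⁻ s in Set.Icc (0 : ℝ) T, (∫⁻ ξ, F s ξ) ^ 2) ^ (1 / 2 : ℝ) *
          (∫⁻ s in Set.Icc (0 : ℝ) T, (∫⁻ ξ, G s ξ) ^ 2) ^ (1 / 2 : ℝ) :=
  stmt_5_general ν T hν F G hF hG H hH
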